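/- arXiv:1806.07001 — 2 statements merged into one kernel-verified Lean document; each statement's English description precedes it below -/
import Mathlib

section
/- Let μ, ν be Borel probability measures on ℝ^d with finite first moments, G : ℝ^d → ℝ^d an M_G-Lipschitz map, and μ̂, ν̂ empirical-type probability measures with finite first moments. Suppose D(G_*μ, ν) ≤ η + ε_cl for constants η, ε_cl ≥ 0, and suppose ε_cl − ε_adv + η < D(ν, ν̂) − M_G · D(μ, μ̂). Then D(G_*μ̂, ν) − D(ν̂, ν) < ε_adv, where D(ρ, σ) := ∫∫ ‖x − y‖ dρ(x) dσ(y). -/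
open MeasureTheory

noncomputable def Dlk {d : ℕ} (ρ σ : Measure (EuclideanSpace ℝ (Fin d))) : ℝ :=
  ∫ y, ∫ x, ‖x - y‖ ∂ρ ∂σ

/-! The kernel `‖x - y‖` makes `Dlk` satisfy the triangle inequality
`Dlk ρ τ ≤ Dlk σ ρ + Dlk σ τ` for probability measures (average
`‖x - z‖ ≤ ‖x - y‖ + ‖y - z‖` over `y ∼ σ`), and pushing both arguments forward along an
`M`-Lipschitz map scales `Dlk` by at most `M`. Taking `σ = G_*μ` gives
`Dlk (G_*μ̂) ν ≤ M · Dlk μ μ̂ + Dlk (G_*μ) ν ≤ M · Dlk μ μ̂ + η + ε_cl`, and since `Dlk` is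
symmetric the hypothesis on `ε_cl - ε_adv + η` rearranges to the claim. -/

open Filter

section Integrals

variable {X Y : Type*} [MeasurableSpace X] [MeasurableSpace Y] {μ : Measure X} {ν : Measure Y}

theorem integral_integral_mono_of_nonneg {F H : X → Y → ℝ} (hF : ∀ x y, 0 ≤ F x y)
    (hH : ∀ y, Integrable (H · y) μ) (hH' : Integrable (fun y => ∫ x, H x y ∂μ) ν)
    (hle : ∀ x y, F x y ≤ H x y) :
    ∫ y, ∫ x, F x y ∂μ ∂ν ≤ ∫ y, ∫ x, H x y ∂μ ∂ν :=
  integral_mono_of_nonneg (.of_forall fun y => integral_nonneg (hF · y)) hH'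
    (.of_forall fun y =>
      integral_mono_of_nonneg (.of_forall (hF · y)) (hH y) (.of_forall (hle · y)))

theorem integral_integral_le_of_le_add [IsProbabilityMeasure μ] [IsProbabilityMeasure ν]
    {F : X → Y → ℝ} {a : X → ℝ} {b : Y → ℝ} (hF : ∀ x y, 0 ≤ F x y)
    (ha : Integrable a μ) (hb : Integrable b ν) (hle : ∀ x y, F x y ≤ a x + b y) :
    ∫ y, ∫ x, F x y ∂μ ∂ν ≤ ∫ x, a x ∂μ + ∫ y, b y ∂ν := by
  have hinner : ∀ y, ∫ x, (a x + b y) ∂μ = ∫ x, a x ∂μ + b y := fun y => by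
    simp [integral_add ha (integrable_const (b y))]
  calc ∫ y, ∫ x, F x y ∂μ ∂ν ≤ ∫ y, ∫ x, (a x + b y) ∂μ ∂ν :=
        integral_integral_mono_of_nonneg hF (fun y => ha.add (integrable_const _))
          (by simp only [hinner]; exact (integrable_const _).add hb) hle
    _ = ∫ x, a x ∂μ + ∫ y, b y ∂ν := by
      simp [hinner, integral_add (integrable_const _) hb]

end Integrals

section FirstMoment

variable {X E F : Type*} [MeasurableSpace X] [NormedAddCommGroup E] [NormedAddCommGroup F]

theorem LipschitzWith.integrable_comp {K : NNReal} {G : E → F} (hG : LipschitzWith K G)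
    {μ : Measure X} [IsFiniteMeasure μ] {f : X → E} (hf : Integrable f μ) :
    Integrable (G ∘ f) μ := by
  have hG0 : LipschitzWith (K + 0) fun v => G v - G 0 := hG.sub (LipschitzWith.const _)
  have := memLp_one_iff_integrable.mp
    (hG0.comp_memLp (sub_self _) (memLp_one_iff_integrable.mpr hf))
  refine (this.add (integrable_const (G 0))).congr (.of_forall fun x => ?_)
  simp

variable [MeasurableSpace E]

theorem norm_sub_le_integral_add {σ : Measure E} [IsProbabilityMeasure σ]
    (hσ : Integrable id σ) (x z : E) :
    ‖x - z‖ ≤ ∫ y, ‖y - x‖ ∂σ + ∫ y, ‖y - z‖ ∂σ := by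
  have hint : ∀ v : E, Integrable (fun y => ‖y - v‖) σ := fun v =>
    (hσ.sub (integrable_const v)).norm
  calc ‖x - z‖ = ∫ _y, ‖x - z‖ ∂σ := by simp
    _ ≤ ∫ y, (‖y - x‖ + ‖y - z‖) ∂σ :=
      integral_mono (integrable_const _) ((hint x).add (hint z)) fun y =>
        (norm_sub_le_norm_sub_add_norm_sub x y z).trans_eq (by rw [norm_sub_rev x y])
    _ = ∫ y, ‖y - x‖ ∂σ + ∫ y, ‖y - z‖ ∂σ := integral_add (hint x) (hint z)

theorem integrable_integral_norm_sub {σ ρ : Measure E} [IsFiniteMeasure σ] [IsFiniteMeasure ρ]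
    (hσ : Integrable id σ) (hρ : Integrable id ρ) :
    Integrable (fun x => ∫ y, ‖y - x‖ ∂σ) ρ :=
  ((hσ.comp_snd ρ).sub (hρ.comp_fst σ)).norm.integral_prod_left

theorem LipschitzWith.integrable_id_map [OpensMeasurableSpace E] [MeasurableSpace F]
    [BorelSpace F] [SecondCountableTopology F] {K : NNReal} {G : E → F}
    (hG : LipschitzWith K G) {μ : Measure E} [IsFiniteMeasure μ] (hμ : Integrable id μ) :
    Integrable id (μ.map G) :=
  (integrable_map_measure aestronglyMeasurable_id hG.continuous.aemeasurable).2
    (hG.integrable_comp hμ)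

end FirstMoment

section Dlk

variable {d : ℕ}

theorem Dlk_map_map {G : EuclideanSpace ℝ (Fin d) → EuclideanSpace ℝ (Fin d)}
    {ρ σ : Measure (EuclideanSpace ℝ (Fin d))} [IsFiniteMeasure ρ] (hG : Measurable G) :
    Dlk (ρ.map G) (σ.map G) = ∫ y, ∫ x, ‖G x - G y‖ ∂ρ ∂σ := by
  have hmeas : StronglyMeasurable fun y => ∫ x, ‖x - y‖ ∂ρ.map G :=
    (continuous_snd.sub continuous_fst).norm.stronglyMeasurable.integral_prod_right'
  rw [Dlk, integral_map hG.aemeasurable hmeas.aestronglyMeasurable]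
  refine integral_congr_ae (.of_forall fun y => ?_)
  exact integral_map hG.aemeasurable (by fun_prop)

theorem Dlk_le_add {ρ σ τ : Measure (EuclideanSpace ℝ (Fin d))}
    [IsProbabilityMeasure ρ] [IsProbabilityMeasure σ] [IsProbabilityMeasure τ]
    (hρ : Integrable id ρ) (hσ : Integrable id σ) (hτ : Integrable id τ) :
    Dlk ρ τ ≤ Dlk σ ρ + Dlk σ τ :=
  integral_integral_le_of_le_add (fun _ _ => norm_nonneg _) (integrable_integral_norm_sub hσ hρ)
    (integrable_integral_norm_sub hσ hτ) (norm_sub_le_integral_add hσ)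

variable {ρ σ : Measure (EuclideanSpace ℝ (Fin d))} [IsFiniteMeasure ρ] [IsFiniteMeasure σ]

theorem Dlk_comm (hρ : Integrable id ρ) (hσ : Integrable id σ) : Dlk ρ σ = Dlk σ ρ := by
  rw [Dlk, Dlk, integral_integral_swap (f := fun y x => ‖x - y‖)
    ((hρ.comp_snd σ).sub (hσ.comp_fst ρ)).norm]
  exact integral_congr_ae (.of_forall fun x =>
    integral_congr_ae (.of_forall fun y => norm_sub_rev x y))

theorem Dlk_map_map_le {K : NNReal} {G : EuclideanSpace ℝ (Fin d) → EuclideanSpace ℝ (Fin d)}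
    (hG : LipschitzWith K G) (hρ : Integrable id ρ) (hσ : Integrable id σ) :
    Dlk (ρ.map G) (σ.map G) ≤ K * Dlk ρ σ := by
  rw [Dlk_map_map hG.continuous.measurable, Dlk]
  simp_rw [← integral_const_mul]
  refine integral_integral_mono_of_nonneg (fun _ _ => norm_nonneg _)
    (fun y => (hρ.sub (integrable_const y)).norm.const_mul K) ?_ hG.norm_sub_le
  simpa only [integral_const_mul, norm_sub_rev] using
    (integrable_integral_norm_sub hρ hσ).const_mul K

end Dlk

theorem stmt5_general {d : ℕ} (μ ν μhat νhat : Measure (EuclideanSpace ℝ (Fin d)))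
    [IsProbabilityMeasure μ] [IsProbabilityMeasure ν]
    [IsProbabilityMeasure μhat] [IsProbabilityMeasure νhat]
    (hμ : Integrable (fun x => ‖x‖) μ) (hν : Integrable (fun x => ‖x‖) ν)
    (hμhat : Integrable (fun x => ‖x‖) μhat)
    (hνhat : Integrable (fun x => ‖x‖) νhat)
    (MG : NNReal) (G : EuclideanSpace ℝ (Fin d) → EuclideanSpace ℝ (Fin d))
    (hG : LipschitzWith MG G)
    (η εcl εadv : ℝ)
    (hERM : Dlk (μ.map G) ν ≤ η + εcl)
    (hcond : εcl - εadv + η < Dlk ν νhat - (MG : ℝ) * Dlk μ μhat) :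
    Dlk (μhat.map G) ν - Dlk νhat ν < εadv := by
  have moment : ∀ {ρ : Measure (EuclideanSpace ℝ (Fin d))},
      Integrable (fun x => ‖x‖) ρ → Integrable id ρ :=
    (integrable_norm_iff aestronglyMeasurable_id).1
  replace hμ := moment hμ; replace hν := moment hν
  replace hμhat := moment hμhat; replace hνhat := moment hνhat
  have hGmeas := hG.continuous.measurable
  have := Measure.isProbabilityMeasure_map (μ := μ) hGmeas.aemeasurable
  have := Measure.isProbabilityMeasure_map (μ := μhat) hGmeas.aemeasurable
  have htriangle : Dlk (μhat.map G) ν ≤ Dlk (μ.map G) (μhat.map G) + Dlk (μ.map G) ν :=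
    Dlk_le_add (hG.integrable_id_map hμhat) (hG.integrable_id_map hμ) hν
  have hlipschitz : Dlk (μ.map G) (μhat.map G) ≤ MG * Dlk μ μhat :=
    Dlk_map_map_le hG hμ hμhat
  have hcomm : Dlk νhat ν = Dlk ν νhat := Dlk_comm hνhat hν
  linarith

theorem stmt5 {d : ℕ} (μ ν μhat νhat : Measure (EuclideanSpace ℝ (Fin d)))
    [IsProbabilityMeasure μ] [IsProbabilityMeasure ν]
    [IsProbabilityMeasure μhat] [IsProbabilityMeasure νhat]
    (hμ : Integrable (fun x => ‖x‖) μ) (hν : Integrable (fun x => ‖x‖) ν)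
    (hμhat : Integrable (fun x => ‖x‖) μhat)
    (hνhat : Integrable (fun x => ‖x‖) νhat)
    (MG : NNReal) (G : EuclideanSpace ℝ (Fin d) → EuclideanSpace ℝ (Fin d))
    (hG : LipschitzWith MG G)
    (η εcl εadv : ℝ) (hη : 0 ≤ η) (hεcl : 0 ≤ εcl)
    (hERM : Dlk (μ.map G) ν ≤ η + εcl)
    (hcond : εcl - εadv + η < Dlk ν νhat - (MG : ℝ) * Dlk μ μhat) :
    Dlk (μhat.map G) ν - Dlk νhat ν < εadv :=
  stmt5_general μ ν μhat νhat hμ hν hμhat hνhat MG G hG η εcl εadv hERM hcond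
end

section
/- With the same setup as the pairing lemma (disjoint charts Uᵢ, Vᵢ, inner-relatedness, G(Uᵢ) ⊆ V_{p(i)} for a permutation p, probability measures μ̃ᵢ on Uᵢ and ν̃ⱼ on Vⱼ), for every matrix A with nonnegative entries and row sums equal to K: ∑_{i,j} A^{ij} ∫_{Uᵢ}∫_{Vⱼ} d(G(s), t) dμ̃ᵢ dν̃ⱼ ≥ K ∑_i ∫_{Uᵢ}∫_{V_{p(i)}} d(G(s), t) dμ̃ᵢ dν̃_{p(i)}. -/
/-! Write `Iᵢⱼ = ∫∫ d(G s, t) dμ̃ᵢ(s) dν̃ⱼ(t)` and fix a chart `Uᵢ`. For `s ∈ Uᵢ` the point `G s`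
lies in `V_{p(i)}`, so by inner-relatedness `d(G s, t) ≤ d(G s, t')` whenever `t ∈ V_{p(i)}` and
`t' ∈ Vⱼ`. Integrating in `s`, then in `t` against `ν̃_{p(i)}` and in `t'` against `ν̃ⱼ`, gives
`Iᵢ,p(i) ≤ Iᵢⱼ` for every `j`. Since the `i`-th row of `A` is nonnegative with sum `K`,
`K · Iᵢ,p(i) ≤ ∑ⱼ Aⁱʲ Iᵢⱼ`; sum over `i`. -/

open MeasureTheory

theorem Finset.mul_sum_le_sum_sum_mul_of_sum_eq {ι κ : Type*} [Fintype ι] [Fintype κ]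
    {A d : ι → κ → ℝ} {c : ι → ℝ} {r : ℝ} (hA : ∀ i j, 0 ≤ A i j) (hrow : ∀ i, ∑ j, A i j = r)
    (hcd : ∀ i j, c i ≤ d i j) :
    r * ∑ i, c i ≤ ∑ i, ∑ j, A i j * d i j := by
  calc r * ∑ i, c i = ∑ i, ∑ j, A i j * c i := by
        rw [Finset.mul_sum]
        exact Finset.sum_congr rfl fun i _ => by rw [← Finset.sum_mul, hrow, mul_comm]
    _ ≤ ∑ i, ∑ j, A i j * d i j := by
        gcongr with i _ j _
        · exact hA i j
        · exact hcd i j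

theorem ae_mem_of_measure_eq_one {α : Type*} [MeasurableSpace α] {μ : Measure α}
    [IsProbabilityMeasure μ] {s : Set α} (hs : MeasurableSet s) (hμs : μ s = 1) :
    ∀ᵐ x ∂μ, x ∈ s :=
  (ae_mem_iff_measure_eq hs.nullMeasurableSet).2 (by rw [hμs, measure_univ])

theorem integral_le_integral_of_forall_le {α : Type*} [MeasurableSpace α] {ν₁ ν₂ : Measure α}
    [IsProbabilityMeasure ν₁] [IsProbabilityMeasure ν₂] {f : α → ℝ} {S T : Set α}
    (hf₁ : Integrable f ν₁) (hf₂ : Integrable f ν₂)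
    (hS : ∀ᵐ t ∂ν₁, t ∈ S) (hT : ∀ᵐ t ∂ν₂, t ∈ T) (hST : ∀ t ∈ S, ∀ t' ∈ T, f t ≤ f t') :
    ∫ t, f t ∂ν₁ ≤ ∫ t, f t ∂ν₂ := by
  have hle : ∀ t' ∈ T, ∫ t, f t ∂ν₁ ≤ f t' := fun t' ht' => by
    simpa using integral_mono_ae hf₁ (integrable_const (f t'))
      (hS.mono fun t ht => hST t ht t' ht')
  simpa using integral_mono_ae (integrable_const _) hf₂ (hT.mono hle)

section IteratedIntegral

variable {M N : Type*} [MeasurableSpace M] [MeasurableSpace N]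
  {μ : Measure M} {ν₁ ν₂ : Measure N} [SFinite μ] [IsProbabilityMeasure ν₁] [IsProbabilityMeasure ν₂]

theorem integral_integral_le_of_forall_le {f : M → N → ℝ} {U : Set M} {V W : Set N}
    (hU : ∀ᵐ s ∂μ, s ∈ U) (hV : ∀ᵐ t ∂ν₁, t ∈ V) (hW : ∀ᵐ t ∂ν₂, t ∈ W)
    (hf : ∀ s ∈ U, ∀ t ∈ V, ∀ t' ∈ W, f s t ≤ f s t')
    (h₁ : Integrable (Function.uncurry f) (μ.prod ν₁))
    (h₂ : Integrable (Function.uncurry f) (μ.prod ν₂)) :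
    ∫ t, ∫ s, f s t ∂μ ∂ν₁ ≤ ∫ t, ∫ s, f s t ∂μ ∂ν₂ := by
  refine integral_le_integral_of_forall_le h₁.integral_prod_right h₂.integral_prod_right
    (S := V ∩ {t | Integrable (f · t) μ}) (T := W ∩ {t | Integrable (f · t) μ})
    (hV.and h₁.prod_left_ae) (hW.and h₂.prod_left_ae) ?_
  rintro t ⟨ht, hft⟩ t' ⟨ht', hft'⟩
  exact integral_mono_ae hft hft' (hU.mono fun s hs => hf s hs t ht t' ht')

theorem integral_integral_dist_le_of_mapsTo [MetricSpace N] {G : M → N} {U : Set M} {V W : Set N}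
    (hU : ∀ᵐ s ∂μ, s ∈ U) (hV : ∀ᵐ t ∂ν₁, t ∈ V) (hW : ∀ᵐ t ∂ν₂, t ∈ W)
    (hmap : Set.MapsTo G U V) (hinner : ∀ x ∈ V, ∀ y ∈ V, ∀ z ∈ W, dist x y ≤ dist x z)
    (h₁ : Integrable (fun q : M × N => dist (G q.1) q.2) (μ.prod ν₁))
    (h₂ : Integrable (fun q : M × N => dist (G q.1) q.2) (μ.prod ν₂)) :
    ∫ t, ∫ s, dist (G s) t ∂μ ∂ν₁ ≤ ∫ t, ∫ s, dist (G s) t ∂μ ∂ν₂ :=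
  integral_integral_le_of_forall_le (f := fun s t => dist (G s) t) hU hV hW
    (fun s hs t ht t' ht' => hinner (G s) (hmap hs) t ht t' ht') h₁ h₂

end IteratedIntegral

theorem stmt13_general {M N : Type*} [MeasurableSpace M] [MetricSpace N]
    [MeasurableSpace N]
    (K : ℕ) (p : Equiv.Perm (Fin K))
    (U : Fin K → Set M) (V : Fin K → Set N)
    (hUmeas : ∀ i, MeasurableSet (U i)) (hVmeas : ∀ i, MeasurableSet (V i))
    (hinner : ∀ i j, j ≠ p i →
      ∀ x ∈ V (p i), ∀ y ∈ V (p i), ∀ z ∈ V j, dist x y ≤ dist x z)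
    (G : M → N)
    (hmap : ∀ i, Set.MapsTo G (U i) (V (p i)))
    (μ : Fin K → Measure M) (ν : Fin K → Measure N)
    [∀ i, IsProbabilityMeasure (μ i)] [∀ j, IsProbabilityMeasure (ν j)]
    (hμsupp : ∀ i, μ i (U i) = 1) (hνsupp : ∀ j, ν j (V j) = 1)
    (hint : ∀ i j, Integrable (fun q : M × N => dist (G q.1) q.2) ((μ i).prod (ν j)))
    (A : Fin K → Fin K → ℝ) (hA : ∀ i j, 0 ≤ A i j)
    (hArow : ∀ i, ∑ j, A i j = K) :
    (K : ℝ) * ∑ i, (∫ t, ∫ s, dist (G s) t ∂(μ i) ∂(ν (p i))) ≤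
      ∑ i, ∑ j, A i j * ∫ t, ∫ s, dist (G s) t ∂(μ i) ∂(ν j) := by
  refine Finset.mul_sum_le_sum_sum_mul_of_sum_eq hA hArow fun i j => ?_
  obtain rfl | hj := eq_or_ne j (p i)
  · exact le_rfl
  exact integral_integral_dist_le_of_mapsTo (ae_mem_of_measure_eq_one (hUmeas i) (hμsupp i))
    (ae_mem_of_measure_eq_one (hVmeas _) (hνsupp _)) (ae_mem_of_measure_eq_one (hVmeas j) (hνsupp j))
    (hmap i) (hinner i j hj) (hint i (p i)) (hint i j)

theorem stmt13 {M N : Type*} [MeasurableSpace M] [MetricSpace N]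
    [MeasurableSpace N] [BorelSpace N]
    (K : ℕ) (hK : 1 ≤ K) (p : Equiv.Perm (Fin K))
    (U : Fin K → Set M) (V : Fin K → Set N)
    (hUmeas : ∀ i, MeasurableSet (U i)) (hVmeas : ∀ i, MeasurableSet (V i))
    (hUdisj : Pairwise fun i j => Disjoint (U i) (U j))
    (hVdisj : Pairwise fun i j => Disjoint (V i) (V j))
    (hinner : ∀ i j, j ≠ p i →
      ∀ x ∈ V (p i), ∀ y ∈ V (p i), ∀ z ∈ V j, dist x y ≤ dist x z)
    (G : M → N) (hGmeas : Measurable G)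
    (hmap : ∀ i, Set.MapsTo G (U i) (V (p i)))
    (μ : Fin K → Measure M) (ν : Fin K → Measure N)
    [∀ i, IsProbabilityMeasure (μ i)] [∀ j, IsProbabilityMeasure (ν j)]
    (hμsupp : ∀ i, μ i (U i) = 1) (hνsupp : ∀ j, ν j (V j) = 1)
    (hint : ∀ i j, Integrable (fun q : M × N => dist (G q.1) q.2) ((μ i).prod (ν j)))
    (A : Fin K → Fin K → ℝ) (hA : ∀ i j, 0 ≤ A i j)
    (hArow : ∀ i, ∑ j, A i j = K) :
    (K : ℝ) * ∑ i, (∫ t, ∫ s, dist (G s) t ∂(μ i) ∂(ν (p i))) ≤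
      ∑ i, ∑ j, A i j * ∫ t, ∫ s, dist (G s) t ∂(μ i) ∂(ν j) :=
  stmt13_general K p U V hUmeas hVmeas hinner G hmap μ ν hμsupp hνsupp hint A hA hArow
end
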